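/- Let n ≥ 2 be an integer, let x_i = (i−1)/(n−1) for i = 1,…,n, and let f : [0,1] → ℝ be continuous and differentiable with derivative f′ of finite total variation on [0,1]. Let A_n(f)′ denote the piecewise constant function that equals (n−1)[f(x_{i+1}) − f(x_i)] on each interval (x_i, x_{i+1}). Then ∫₀¹ |f′(x) − A_n(f)′(x)| dx ≤ Var(f′)/(2(n−1)). -/

import Mathlib

/-!
On a cell `[a, b]` the mean of `f'` is the slope of `f` (fundamental theorem of calculus), and the
values of `f'` lie in an interval `[m, m + V]` with `V` the variation of `f'` on the cell; this
forces `∫ₐᵇ |f' - slope| ≤ (b - a) V / 2`. Variation is additive over adjacent cells, so summing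
over the `n - 1` cells of width `1 / (n - 1)` gives `Var(f') / (2 (n - 1))`.
-/

open MeasureTheory Set

theorem BoundedVariationOn.intervalIntegrable {μ : Measure ℝ} [IsLocallyFiniteMeasure μ]
    {f : ℝ → ℝ} {a b : ℝ} (hf : BoundedVariationOn f (uIcc a b)) :
    IntervalIntegrable f μ a b := by
  obtain ⟨p, q, hp, hq, rfl⟩ := hf.locallyBoundedVariationOn.exists_monotoneOn_sub_monotoneOn
  exact hp.intervalIntegrable.sub hq.intervalIntegrable

theorem BoundedVariationOn.exists_mapsTo_Icc {α : Type*} [LinearOrder α] {f : α → ℝ} {s : Set α}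
    (hf : BoundedVariationOn f s) (hs : s.Nonempty) :
    ∃ m, MapsTo f s (Icc m (m + (eVariationOn f s).toReal)) := by
  obtain ⟨x₀, hx₀⟩ := hs
  have hbdd : BddBelow (f '' s) :=
    ⟨f x₀ - (eVariationOn f s).toReal, forall_mem_image.2 fun y hy => by
      linarith [hf.sub_le hx₀ hy]⟩
  refine ⟨sInf (f '' s), fun x hx => ⟨csInf_le hbdd (mem_image_of_mem f hx), ?_⟩⟩
  have : f x - (eVariationOn f s).toReal ≤ sInf (f '' s) :=
    le_csInf ⟨f x₀, mem_image_of_mem f hx₀⟩ (forall_mem_image.2 fun y hy => by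
      linarith [hf.sub_le hx hy])
  linarith

-- `|y - c|` lies below its chord over `[m, M]`, which is affine in `y`; the integral of an affine
-- function of `g` only depends on the mean `c` of `g`.
theorem integral_abs_sub_le_of_mapsTo_Icc {g : ℝ → ℝ} {a b c m M : ℝ} (hab : a < b)
    (hg : IntervalIntegrable g volume a b) (hgm : MapsTo g (Icc a b) (Icc m M))
    (hc : ∫ x in a..b, g x = (b - a) * c) :
    ∫ x in a..b, |g x - c| ≤ (b - a) * (M - m) / 2 := by
  have hba : 0 < b - a := sub_pos.2 hab
  have hcm : c ∈ Icc m M := by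
    have hlo := intervalIntegral.integral_mono_on hab.le intervalIntegrable_const hg
      fun x hx => (hgm hx).1
    have hhi := intervalIntegral.integral_mono_on hab.le hg intervalIntegrable_const
      fun x hx => (hgm hx).2
    simp only [intervalIntegral.integral_const, smul_eq_mul, hc] at hlo hhi
    exact ⟨le_of_mul_le_mul_left hlo hba, le_of_mul_le_mul_left hhi hba⟩
  have hchord : ∀ x ∈ Icc a b,
      |g x - c| * (M - m) ≤ (M - c) * (g x - m) + (c - m) * (M - g x) := by
    intro x hx
    obtain ⟨hm, hM⟩ := hgm hx
    rcases le_total c (g x) with h | h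
    · rw [abs_of_nonneg (sub_nonneg.2 h)]; nlinarith [hcm.1, hcm.2]
    · rw [abs_of_nonpos (sub_nonpos.2 h)]; nlinarith [hcm.1, hcm.2]
  have hchord_int : ∫ x in a..b, ((M - c) * (g x - m) + (c - m) * (M - g x))
      = 2 * (b - a) * (M - c) * (c - m) := by
    rw [intervalIntegral.integral_add ((hg.sub intervalIntegrable_const).const_mul _)
        ((intervalIntegrable_const.sub hg).const_mul _),
      intervalIntegral.integral_const_mul, intervalIntegral.integral_const_mul,
      intervalIntegral.integral_sub hg intervalIntegrable_const,
      intervalIntegral.integral_sub intervalIntegrable_const hg, hc]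
    simp only [intervalIntegral.integral_const, smul_eq_mul]
    ring
  have habs : IntervalIntegrable (fun x => |g x - c|) volume a b :=
    (hg.sub intervalIntegrable_const).abs
  rcases (hcm.1.trans hcm.2).eq_or_lt with rfl | hmM
  · have hgc : ∀ x ∈ Icc a b, |g x - c| ≤ 0 := fun x hx => by
      rw [le_antisymm ((hgm hx).2.trans hcm.1) (hcm.2.trans (hgm hx).1), sub_self, abs_zero]
    simpa using intervalIntegral.integral_mono_on hab.le habs intervalIntegrable_const hgc
  · have := intervalIntegral.integral_mono_on hab.le (habs.mul_const _)
      (((hg.sub intervalIntegrable_const).const_mul _).add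
        ((intervalIntegrable_const.sub hg).const_mul _)) hchord
    rw [intervalIntegral.integral_mul_const, hchord_int] at this
    refine le_of_mul_le_mul_right ?_ (sub_pos.2 hmM)
    nlinarith [mul_nonneg hba.le (sq_nonneg (M + m - 2 * c))]

theorem integral_abs_deriv_sub_slope_le {f f' : ℝ → ℝ} {a b : ℝ} (hab : a < b)
    (hf : ∀ x ∈ Icc a b, HasDerivWithinAt f (f' x) (Icc a b) x)
    (hf' : BoundedVariationOn f' (Icc a b)) :
    ∫ x in a..b, |f' x - slope f a b| ≤ (b - a) * (eVariationOn f' (Icc a b)).toReal / 2 := by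
  have hint : IntervalIntegrable f' volume a b :=
    BoundedVariationOn.intervalIntegrable (by rwa [uIcc_of_le hab.le])
  have hftc : ∫ x in a..b, f' x = (b - a) * slope f a b := by
    rw [slope_def_field, mul_div_cancel₀ _ (sub_ne_zero.2 hab.ne'),
      intervalIntegral.integral_eq_sub_of_hasDerivAt_of_le hab.le
        (HasDerivWithinAt.continuousOn hf)
        (fun x hx => (hf x (Ioo_subset_Icc_self hx)).hasDerivAt (Icc_mem_nhds hx.1 hx.2)) hint]
  obtain ⟨m, hm⟩ := hf'.exists_mapsTo_Icc (nonempty_Icc.2 hab.le)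
  simpa using integral_abs_sub_le_of_mapsTo_Icc hab hint hm hftc

theorem sum_integral_abs_deriv_sub_slope_le {f f' : ℝ → ℝ} {t : ℕ → ℝ} {k : ℕ} {h : ℝ}
    (ht : StrictMono t) (hh : ∀ i < k, t (i + 1) - t i ≤ h)
    (hf : ∀ x ∈ Icc (t 0) (t k), HasDerivWithinAt f (f' x) (Icc (t 0) (t k)) x)
    (hf' : BoundedVariationOn f' (Icc (t 0) (t k))) :
    ∑ i ∈ Finset.range k, ∫ x in t i..t (i + 1), |f' x - slope f (t i) (t (i + 1))|
      ≤ h * (eVariationOn f' (Icc (t 0) (t k))).toReal / 2 := by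
  have hcell : ∀ i ∈ Finset.range k, Icc (t i) (t (i + 1)) ⊆ Icc (t 0) (t k) := fun i hi =>
    Icc_subset_Icc (ht.monotone i.zero_le) (ht.monotone (Finset.mem_range.1 hi))
  calc ∑ i ∈ Finset.range k, ∫ x in t i..t (i + 1), |f' x - slope f (t i) (t (i + 1))|
      ≤ ∑ i ∈ Finset.range k,
          (t (i + 1) - t i) * (eVariationOn f' (Icc (t i) (t (i + 1)))).toReal / 2 :=
        Finset.sum_le_sum fun i hi => integral_abs_deriv_sub_slope_le (ht i.lt_succ_self)
          (fun x hx => (hf x (hcell i hi hx)).mono (hcell i hi)) (hf'.mono (hcell i hi))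
    _ ≤ ∑ i ∈ Finset.range k, h * (eVariationOn f' (Icc (t i) (t (i + 1)))).toReal / 2 := by
        gcongr with i hi
        exact hh i (Finset.mem_range.1 hi)
    _ = h * (eVariationOn f' (Icc (t 0) (t k))).toReal / 2 := by
        rw [← Finset.sum_div, ← Finset.mul_sum, ← ENNReal.toReal_sum
          fun i hi => (hf'.mono (hcell i hi)), eVariationOn.sum' f' ht.monotone]

theorem spline_derivative_L1_error_general
    (n : ℕ) (hn : 2 ≤ n) (f f' : ℝ → ℝ)
    (hderiv : ∀ x ∈ Icc (0:ℝ) 1, HasDerivWithinAt f (f' x) (Icc 0 1) x)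
    (hbv : BoundedVariationOn f' (Icc 0 1)) :
    ∑ i ∈ Finset.range (n - 1),
        (∫ x in ((i : ℝ) / ((n : ℝ) - 1))..(((i : ℝ) + 1) / ((n : ℝ) - 1)),
          |f' x - ((n : ℝ) - 1) *
            (f (((i : ℝ) + 1) / ((n : ℝ) - 1)) - f ((i : ℝ) / ((n : ℝ) - 1)))|)
      ≤ (eVariationOn f' (Icc 0 1)).toReal / (2 * ((n : ℝ) - 1)) := by
  set N : ℝ := (n : ℝ) - 1
  have hN : 0 < N := by
    have : (2 : ℝ) ≤ n := by exact_mod_cast hn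
    simp only [N]; linarith
  have hNcast : ((n - 1 : ℕ) : ℝ) = N := by rw [Nat.cast_sub (by omega), Nat.cast_one]
  have ht : StrictMono fun i : ℕ => (i : ℝ) / N := fun i j hij =>
    div_lt_div_of_pos_right (Nat.cast_lt.2 hij) hN
  have hends : Icc ((0 : ℕ) / N) ((n - 1 : ℕ) / N) = Icc 0 1 := by
    rw [hNcast, Nat.cast_zero, zero_div, div_self hN.ne']
  have key := sum_integral_abs_deriv_sub_slope_le (f := f) (k := n - 1) (h := 1 / N) ht
    (fun i _ => by push_cast; rw [← sub_div, add_sub_cancel_left])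
    (hends ▸ hderiv) (hends ▸ hbv)
  rw [hends] at key
  convert key using 1
  · refine Finset.sum_congr rfl fun i _ => ?_
    push_cast
    rw [slope_def_field, ← sub_div, add_sub_cancel_left]
    field_simp
  · field_simp

/-- `∫₀¹ |f′ − A_n(f)′| ≤ Var(f′) / (2(n−1))` where `A_n(f)′` is the piecewise constant
derivative of the linear spline interpolant, equal to `(n−1)[f(x_{i+1}) − f(x_i)]` on the
`i`-th subinterval; the `L¹` norm is written as the sum of the integrals over the
subintervals. -/
theorem spline_derivative_L1_error
    (n : ℕ) (hn : 2 ≤ n) (f f' : ℝ → ℝ)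
    (hf : ContinuousOn f (Icc 0 1))
    (hderiv : ∀ x ∈ Icc (0:ℝ) 1, HasDerivWithinAt f (f' x) (Icc 0 1) x)
    (hbv : BoundedVariationOn f' (Icc 0 1))
    (hint : IntervalIntegrable f' volume 0 1) :
    ∑ i ∈ Finset.range (n - 1),
        (∫ x in ((i : ℝ) / ((n : ℝ) - 1))..(((i : ℝ) + 1) / ((n : ℝ) - 1)),
          |f' x - ((n : ℝ) - 1) *
            (f (((i : ℝ) + 1) / ((n : ℝ) - 1)) - f ((i : ℝ) / ((n : ℝ) - 1)))|)
      ≤ (eVariationOn f' (Icc 0 1)).toReal / (2 * ((n : ℝ) - 1)) :=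
  spline_derivative_L1_error_general n hn f f' hderiv hbv
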